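/- arXiv:1805.00404 — 11 statements merged into one kernel-verified Lean document; each statement's English description precedes it below -/
import Mathlib

section
/- Assume the Kreisel–Troelstra axioms for a proof-stage operator Box : ℕ → Prop → Prop in weak form: CS1: ∀n, Box n A ∨ ¬Box n A; CS3a: A → ¬¬∃n, Box n A; CS3b: (∃n, Box n A) → A. Then the weak Brouwer–Kripke schema holds for A: there exists a sequence α : ℕ → ℕ with ∀n, (α n = 0 ∨ α n = 1), (∀n, α n = 0) ↔ ¬A, and (∃n, α n = 1) → A. -/
theorem cs_minus_implies_bks_minus (Box : ℕ → Prop → Prop) (A : Prop)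
    (cs1 : ∀ n, Box n A ∨ ¬ Box n A)
    (cs3a : A → ¬¬ ∃ n, Box n A)
    (cs3b : (∃ n, Box n A) → A) :
    ∃ α : ℕ → ℕ,
      (∀ n, α n = 0 ∨ α n = 1) ∧
      ((∀ n, α n = 0) ↔ ¬A) ∧
      ((∃ n, α n = 1) → A) := by
  classical
  refine ⟨fun n => if Box n A then 1 else 0, fun n => ?_, ⟨?_, ?_⟩, ?_⟩
  · by_cases h : Box n A <;> simp [h]
  · intro h hA
    apply cs3a hA
    rintro ⟨n, hn⟩
    have := h n
    simp [hn] at this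
  · intro hA n
    rcases cs1 n with h | h
    · exact absurd (cs3b ⟨n, h⟩) hA
    · simp [h]
  · rintro ⟨n, hn⟩
    rcases cs1 n with h | h
    · exact cs3b ⟨n, h⟩
    · simp [h] at hn
end

section
/- The weak Brouwer–Kripke schema together with Markov's Principle implies double negation elimination: if for every proposition A there exists a binary sequence α with (∀n, α n = 0) ↔ ¬A and (∃n, α n = 1) → A, and Markov's Principle holds for all binary sequences (¬¬(∃n, α n = 1) → ∃n, α n = 1), then for every proposition A, ¬¬A → A. -/
theorem bks_minus_and_mp_imply_dne
    (bks : ∀ A : Prop, ∃ α : ℕ → ℕ,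
      (∀ n, α n = 0 ∨ α n = 1) ∧
      ((∀ n, α n = 0) ↔ ¬A) ∧
      ((∃ n, α n = 1) → A))
    (mp : ∀ α : ℕ → ℕ, (∀ n, α n = 0 ∨ α n = 1) →
      ¬¬(∃ n, α n = 1) → ∃ n, α n = 1) :
    ∀ A : Prop, ¬¬A → A := by
  intro A hnnA
  obtain ⟨α, hbin, hall, hex⟩ := bks A
  apply hex
  apply mp α hbin
  intro hne
  apply hnnA
  intro hA
  apply hne
  by_contra h'
  exact (hall.mp (fun n => (hbin n).resolve_right (fun h1 => h' ⟨n, h1⟩))) hA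
end

section
/- The strong Brouwer–Kripke schema together with Markov's Principle implies the principle of excluded middle: if for every proposition A there exists a binary sequence α with (∃n, α n = 1) ↔ A, and ¬¬(∃n, α n = 1) → ∃n, α n = 1 holds for all binary sequences, then for every proposition A, A ∨ ¬A. -/
theorem bks_plus_and_mp_imply_pem
    (bks : ∀ A : Prop, ∃ α : ℕ → ℕ,
      (∀ n, α n = 0 ∨ α n = 1) ∧
      ((∃ n, α n = 1) ↔ A))
    (mp : ∀ α : ℕ → ℕ, (∀ n, α n = 0 ∨ α n = 1) →
      ¬¬(∃ n, α n = 1) → ∃ n, α n = 1) :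
    ∀ A : Prop, A ∨ ¬A := by
  intro A
  obtain ⟨α, hbin, hiff⟩ := bks (A ∨ ¬A)
  refine hiff.mp (mp α hbin (fun h => ?_))
  have hna : ¬(A ∨ ¬A) := fun x => h (hiff.mpr x)
  exact hna (Or.inr (fun a => hna (Or.inl a)))
end

section
/- Weak Continuity for Numbers contradicts Church's Thesis: if WC-N holds, i.e. for every predicate A on sequences and numbers, (∀α, ∃x, A α x) → ∀α, ∃m x, ∀β, (∀i < m, α i = β i) → A β x, then Church's Thesis in the form 'for every f : ℕ → ℕ there exists an index e such that ∀n, ∃p, T₁ e n p ∧ U p = f n' is false. -/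
theorem wcn_contradicts_church_thesis
    (T1 : ℕ → ℕ → ℕ → Prop) (U : ℕ → ℕ)
    (hfun : ∀ (e : ℕ) (f g : ℕ → ℕ),
      (∀ n, ∃ p, T1 e n p ∧ U p = f n) →
      (∀ n, ∃ p, T1 e n p ∧ U p = g n) → f = g)
    (wcn : ∀ A : (ℕ → ℕ) → ℕ → Prop,
      (∀ α : ℕ → ℕ, ∃ x, A α x) →
      ∀ α : ℕ → ℕ, ∃ m x, ∀ β : ℕ → ℕ, (∀ i < m, α i = β i) → A β x) :
    ¬ ∀ f : ℕ → ℕ, ∃ e, ∀ n, ∃ p, T1 e n p ∧ U p = f n := by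
  intro ct
  obtain ⟨m, e, he⟩ := wcn (fun α e => ∀ n, ∃ p, T1 e n p ∧ U p = α n) ct (fun _ => 0)
  have h1 := he (fun _ => 0) (fun _ _ => rfl)
  have h2 := he (fun n => if n < m then 0 else 1)
    (fun i hi => by simp [hi])
  have := hfun e _ _ h1 h2
  have := congrFun this m
  simp at this
end

section
/- Under the strong Kreisel–Troelstra axioms, every inhabited decidable-by-stages species of natural numbers is enumerable by the creating subject: if X ⊆ ℕ is a species with some a ∈ X known at stage 0 (Box 0 (a ∈ X)), and CS1 and CS+3 hold for all membership propositions, then there exists f : ℕ → ℕ such that for all n, n ∈ X ↔ ∃m, f (pair n m) = n, where pair is a pairing bijection ℕ × ℕ → ℕ. -/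
theorem cs_plus_enumerates_inhabited_species
    (Box : ℕ → Prop → Prop) (X : ℕ → Prop) (pair : ℕ → ℕ → ℕ)
    (hpair : Function.Injective (fun p : ℕ × ℕ => pair p.1 p.2))
    (cs1 : ∀ (n : ℕ) (P : Prop), Box n P ∨ ¬ Box n P)
    (cs3 : ∀ P : Prop, (∃ n, Box n P) ↔ P)
    (a : ℕ) (ha : Box 0 (X a)) :
    ∃ f : ℕ → ℕ, ∀ n, X n ↔ ∃ m, f (pair n m) = n := by
  classical
  refine ⟨fun k => if h : ∃ p : ℕ × ℕ, pair p.1 p.2 = k ∧ Box p.2 (X p.1)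
      then (Classical.choose h).1 else a, fun n => ?_⟩
  constructor
  · intro hx
    obtain ⟨m, hm⟩ := (cs3 (X n)).mpr hx
    refine ⟨m, ?_⟩
    have h : ∃ p : ℕ × ℕ, pair p.1 p.2 = pair n m ∧ Box p.2 (X p.1) :=
      ⟨(n, m), rfl, hm⟩
    simp only [dif_pos h]
    have hc := Classical.choose_spec h
    have : Classical.choose h = (n, m) := hpair hc.1
    rw [this]
  · rintro ⟨m, hm⟩
    by_cases h : ∃ p : ℕ × ℕ, pair p.1 p.2 = pair n m ∧ Box p.2 (X p.1)
    · have hc := Classical.choose_spec h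
      have he : Classical.choose h = (n, m) := hpair hc.1
      rw [he] at hc
      exact (cs3 (X n)).mp ⟨m, hc.2⟩
    · simp only [dif_neg h] at hm
      subst hm
      exact (cs3 (X a)).mp ⟨0, ha⟩
end

section
/- The weak Brouwer–Kripke schema for species implies the existence of a non-representable function: for every predicate A : ℕ → ℕ → ℕ → Prop, BKS⁻ for species yields a function f : ℕ → ℕ such that ¬∃n, ∀x y, (f x = y ↔ A n x y). -/
theorem bks_minus_species_nonrepresentable_function
    (j : ℕ → ℕ → ℕ)
    (hj : Function.Injective (fun p : ℕ × ℕ => j p.1 p.2))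
    (bks : ∀ X : ℕ → Prop, ∃ β : ℕ → ℕ,
      (∀ n, β n = 0 ∨ β n = 1) ∧
      (∀ x, (∀ y, β (j x y) = 0) ↔ ¬ X x)) :
    ∀ A : ℕ → ℕ → ℕ → Prop,
      ∃ f : ℕ → ℕ, ¬ ∃ n, ∀ x y, (f x = y ↔ A n x y) := by
  intro A
  obtain ⟨β, -, hβ⟩ := bks (fun n => ∀ k, A n (j n k) 0)
  refine ⟨β, ?_⟩
  rintro ⟨z, hz⟩
  have key : (∀ y, β (j z y) = 0) ↔ (∀ k, A z (j z k) 0) := by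
    constructor
    · intro h k; exact (hz (j z k) 0).mp (h k)
    · intro h k; exact (hz (j z k) 0).mpr (h k)
  have h1 := (hβ z).mp
  have h2 := (hβ z).mpr
  have hnot : ¬ (∀ k, A z (j z k) 0) := fun h => h1 (key.mpr h) h
  exact hnot (key.mp (h2 hnot))
end

section
/- The weak Brouwer–Kripke schema is inconsistent with ∀α∃β-continuity: if for every real number α (coded as a choice sequence) there is a binary sequence β with (∀n, β n = 0) ↔ (α irrational) and (∃n, β n = 1) → (α rational), and moreover β = Φ α for a continuous functional Φ (continuity meaning each value β n depends on only finitely many values of α), then a contradiction follows, since any finite initial segment of a rational α can be extended to an irrational number. -/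
/-- α is a Cauchy sequence of rationals (a coded real number). -/
def IsCauchySeq (α : ℕ → ℚ) : Prop :=
  ∀ ε : ℚ, 0 < ε → ∃ N, ∀ m ≥ N, ∀ n ≥ N, |α m - α n| < ε

/-- α is rational: it converges to a rational number. -/
def IsRationalSeq (α : ℕ → ℚ) : Prop :=
  ∃ q : ℚ, ∀ ε : ℚ, 0 < ε → ∃ N, ∀ n ≥ N, |α n - q| < ε

/-!
Continuity at the rational sequence `0` fixes a modulus `m`. Extend its first `m` terms by
rational approximations of `√2`: the resulting sequence `γ` is irrational, so `Φ γ` is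
identically `0`. Since `γ` agrees with `0` below `m`, also `Φ 0 = Φ γ` is identically `0`,
which declares the rational sequence `0` irrational.
-/

open Filter Topology

theorem isCauchySeq_of_tendsto {α : ℕ → ℚ} {x : ℝ}
    (h : Tendsto (fun n => (α n : ℝ)) atTop (𝓝 x)) : IsCauchySeq α := by
  intro ε hε
  obtain ⟨N, hN⟩ := Metric.cauchySeq_iff.1 h.cauchySeq ε (by exact_mod_cast hε)
  refine ⟨N, fun m hm n hn => ?_⟩
  have h_dist := hN m hm n hn
  rw [Real.dist_eq] at h_dist
  exact_mod_cast h_dist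

theorem isRationalSeq_const (q : ℚ) : IsRationalSeq fun _ => q :=
  ⟨q, fun ε hε => ⟨0, fun n _ => by simpa using hε⟩⟩

theorem IsRationalSeq.exists_tendsto {α : ℕ → ℚ} (h : IsRationalSeq α) :
    ∃ q : ℚ, Tendsto (fun n => (α n : ℝ)) atTop (𝓝 (q : ℝ)) := by
  obtain ⟨q, hq⟩ := h
  refine ⟨q, Metric.tendsto_atTop.2 fun ε hε => ?_⟩
  obtain ⟨δ, hδ, hδε⟩ := exists_rat_btwn hε
  obtain ⟨N, hN⟩ := hq δ (by exact_mod_cast hδ)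
  refine ⟨N, fun n hn => ?_⟩
  rw [Real.dist_eq]
  exact lt_trans (by exact_mod_cast hN n hn) hδε

theorem not_isRationalSeq_of_tendsto {α : ℕ → ℚ} {x : ℝ} (hx : Irrational x)
    (h : Tendsto (fun n => (α n : ℝ)) atTop (𝓝 x)) : ¬ IsRationalSeq α := fun hα =>
  let ⟨q, hq⟩ := hα.exists_tendsto
  hx ⟨q, tendsto_nhds_unique hq h⟩

theorem exists_seq_eq_of_lt_tendsto (α : ℕ → ℚ) (m : ℕ) (x : ℝ) :
    ∃ γ : ℕ → ℚ, (∀ i < m, α i = γ i) ∧ Tendsto (fun n => (γ n : ℝ)) atTop (𝓝 x) := by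
  obtain ⟨u, -, -, hu⟩ := Real.exists_seq_rat_strictMono_tendsto x
  refine ⟨fun i => if i < m then α i else u i, fun i hi => by simp [hi], hu.congr' ?_⟩
  filter_upwards [eventually_ge_atTop m] with i hi
  simp [not_lt.2 hi]

theorem bks_minus_inconsistent_with_continuity_general
    (Φ : (ℕ → ℚ) → (ℕ → ℕ))
    (hbks1 : ∀ α, IsCauchySeq α → ((∀ n, Φ α n = 0) ↔ ¬ IsRationalSeq α))
    (hcont : ∀ α, IsCauchySeq α →
      ∃ m, ∀ γ, IsCauchySeq γ → (∀ i < m, α i = γ i) → Φ α = Φ γ) :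
    False := by
  have hα : IsCauchySeq fun _ => 0 := isCauchySeq_of_tendsto tendsto_const_nhds
  obtain ⟨m, hm⟩ := hcont _ hα
  obtain ⟨γ, hαγ, hγ⟩ := exists_seq_eq_of_lt_tendsto _ m √2
  have hγ_cauchy : IsCauchySeq γ := isCauchySeq_of_tendsto hγ
  have hγ_zero : ∀ n, Φ γ n = 0 :=
    (hbks1 γ hγ_cauchy).2 (not_isRationalSeq_of_tendsto irrational_sqrt_two hγ)
  rw [← hm γ hγ_cauchy hαγ] at hγ_zero
  exact (hbks1 _ hα).1 hγ_zero (isRationalSeq_const 0)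

theorem bks_minus_inconsistent_with_continuity
    (Φ : (ℕ → ℚ) → (ℕ → ℕ))
    (hbin : ∀ α, IsCauchySeq α → ∀ n, Φ α n = 0 ∨ Φ α n = 1)
    (hbks1 : ∀ α, IsCauchySeq α → ((∀ n, Φ α n = 0) ↔ ¬ IsRationalSeq α))
    (hbks2 : ∀ α, IsCauchySeq α → ((∃ n, Φ α n = 1) → IsRationalSeq α))
    (hcont : ∀ α, IsCauchySeq α →
      ∃ m, ∀ γ, IsCauchySeq γ → (∀ i < m, α i = γ i) → Φ α = Φ γ) :
    False :=
  bks_minus_inconsistent_with_continuity_general Φ hbks1 hcont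
end

section
/- Markov's Principle for arbitrary real numbers implies that the virtual order coincides with the measurable order at 0: if for every binary sequence α, ¬¬(∃n, α n = 1) → ∃n, α n = 1, then for every real number r (given as a Cauchy sequence of rationals with modulus |r n − r| < 2^(−n)), r > 0 → r >° 0. -/
def Coincide (x y : ℕ → ℚ) : Prop :=
  ∀ n : ℕ, ∃ m : ℕ, ∀ i ≥ m, |x i - y i| < (2:ℚ)^(-(n:ℤ))

def MLt (x y : ℕ → ℚ) : Prop :=
  ∃ m n : ℕ, ∀ i ≥ m, y i - x i > (2:ℚ)^(-(n:ℤ))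

def zeroSeq : ℕ → ℚ := fun _ => 0

theorem mp_implies_virtual_gt_measurable_gt
    (mp : ∀ α : ℕ → ℕ, (∀ n, α n = 0 ∨ α n = 1) →
      ¬¬(∃ n, α n = 1) → ∃ n, α n = 1)
    (r : ℕ → ℚ)
    (hr : ∀ m n : ℕ, |r n - r m| < (2:ℚ)^(-(n:ℤ)) + (2:ℚ)^(-(m:ℤ)))
    (h : ¬ MLt r zeroSeq ∧ ¬ Coincide r zeroSeq) :
    MLt zeroSeq r := by
  obtain ⟨hlt, hco⟩ := h
  set α : ℕ → ℕ := fun n => if 3 * (2:ℚ)^(-(n:ℤ)) ≤ |r n| then 1 else 0 with hα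
  have hbin : ∀ n, α n = 0 ∨ α n = 1 := by
    intro n; simp only [hα]; split <;> simp
  have hpos : ∀ k : ℤ, (0:ℚ) < 2 ^ k := fun k => zpow_pos (by norm_num) k
  have hmono : ∀ i n : ℕ, n ≤ i → (2:ℚ)^(-(i:ℤ)) ≤ (2:ℚ)^(-(n:ℤ)) := by
    intro i n hni
    apply zpow_le_zpow_right₀ (by norm_num)
    omega
  have hnn : ¬¬ ∃ n, α n = 1 := by
    intro hno
    apply hco
    intro n
    refine ⟨n + 2, fun i hi => ?_⟩
    have h1 : ¬ (3 * (2:ℚ)^(-(i:ℤ)) ≤ |r i|) := by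
      intro hc
      exact hno ⟨i, by simp only [hα]; rw [if_pos hc]⟩
    push_neg at h1
    have h2 : (2:ℚ)^(-(i:ℤ)) ≤ (2:ℚ)^(-((n:ℤ)+2)) := by
      have := hmono i (n+2) hi
      simpa [Nat.cast_add] using this
    have h3 : (2:ℚ)^(-((n:ℤ)+2)) = (2:ℚ)^(-(n:ℤ)) / 4 := by
      rw [neg_add, zpow_add₀ (by norm_num : (2:ℚ) ≠ 0)]
      norm_num
      ring
    have h4 : (0:ℚ) < 2 ^ (-(n:ℤ)) := hpos _
    simp only [zeroSeq, sub_zero]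
    calc |r i| < 3 * (2:ℚ)^(-(i:ℤ)) := h1
      _ ≤ 3 * ((2:ℚ)^(-(n:ℤ)) / 4) := by nlinarith
      _ < (2:ℚ)^(-(n:ℤ)) := by linarith
  obtain ⟨n, hn⟩ := mp α hbin hnn
  have hrn : 3 * (2:ℚ)^(-(n:ℤ)) ≤ |r n| := by
    simp only [hα] at hn
    by_contra hc
    rw [if_neg hc] at hn
    simp at hn
  have key : ∀ i, n ≤ i → |r i - r n| < 2 * (2:ℚ)^(-(n:ℤ)) := by
    intro i hi
    have := hr n i
    have h2 := hmono i n hi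
    calc |r i - r n| < (2:ℚ)^(-(i:ℤ)) + (2:ℚ)^(-(n:ℤ)) := this
      _ ≤ 2 * (2:ℚ)^(-(n:ℤ)) := by linarith
  rcases le_abs.mp hrn with hp | hm
  · refine ⟨n, n, fun i hi => ?_⟩
    have hk := key i hi
    have := abs_lt.mp hk
    simp only [zeroSeq, sub_zero]
    linarith [this.1]
  · exfalso
    apply hlt
    refine ⟨n, n, fun i hi => ?_⟩
    have hk := key i hi
    have := abs_lt.mp hk
    simp only [zeroSeq, zero_sub]
    linarith [this.2]
end

section
/- From the countable-to-function form of the weak Brouwer–Kripke schema one derives an enumeration form: if X : ℕ → Prop is inhabited by a with a ∈ X, and there exists β : ℕ → ℕ with ∀n, β n = 0 ∨ β n = 1, ∀x, ((∀n, β (j x n) = 0) ↔ x ∉ X) and ∀x, ((∃n, β (j x n) = 1) → x ∈ X), then there exists f : ℕ → ℕ such that ∀x, (¬∃n, f n = x → x ∉ X) and (∃n, f n = x → x ∈ X). -/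
theorem bks_minus_species_to_enumeration
    (j : ℕ → ℕ → ℕ)
    (hj : Function.Injective (fun p : ℕ × ℕ => j p.1 p.2))
    (X : ℕ → Prop) (a : ℕ) (ha : X a)
    (β : ℕ → ℕ)
    (hbin : ∀ n, β n = 0 ∨ β n = 1)
    (h1 : ∀ x, (∀ n, β (j x n) = 0) ↔ ¬ X x)
    (h2 : ∀ x, (∃ n, β (j x n) = 1) → X x) :
    ∃ f : ℕ → ℕ, ∀ x,
      ((¬ ∃ n, f n = x) → ¬ X x) ∧ ((∃ n, f n = x) → X x) := by
  classical
  refine ⟨fun n => if h : ∃ x k, j x k = n ∧ β n = 1 then h.choose else a, fun x => ⟨?_, ?_⟩⟩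
  · intro hne hX
    apply hne
    have hnall : ¬ ∀ n, β (j x n) = 0 := fun h => (h1 x).mp h hX
    obtain ⟨k, hk⟩ := not_forall.mp hnall
    have hk1 : β (j x k) = 1 := (hbin _).resolve_left hk
    refine ⟨j x k, ?_⟩
    have hcond : ∃ x' k', j x' k' = j x k ∧ β (j x k) = 1 := ⟨x, k, rfl, hk1⟩
    show dite _ _ _ = x
    rw [dif_pos hcond]
    obtain ⟨k', hjk', _⟩ := hcond.choose_spec
    have := hj (a₁ := (hcond.choose, k')) (a₂ := (x, k)) hjk'
    exact congrArg Prod.fst this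
  · rintro ⟨n, hn⟩
    by_cases hcond : ∃ x' k', j x' k' = n ∧ β n = 1
    · simp only [dif_pos hcond] at hn
      obtain ⟨k', hjk', hb⟩ := hcond.choose_spec
      subst hn
      exact h2 _ ⟨k', by rwa [hjk']⟩
    · simp only [dif_neg hcond] at hn
      exact hn ▸ ha
end

section
/- For the Creating Subject real number built from an untestable proposition, positivity hypotheses yield testability: suppose Box : ℕ → Prop → Prop satisfies CS1, CS2 (∀n m, Box n P → Box (n+m) P) and CS⁻3 for all propositions, and r : ℕ → ℚ is defined by r n = 0 if ∀m ≤ n, ¬Box m A ∧ ¬Box m ¬A; r n = 2^(−k) if k ≤ n is least with Box k A; r n = −2^(−k) if k ≤ n is least with Box k ¬A. Then: (a) if ∃n, r n > 0 then A (hence ¬A ∨ ¬¬A); (b) if ∃n, r n < 0 then ¬A; hence (∃n, r n > 0) ∨ (∃n, r n < 0) → (¬A ∨ ¬¬A). -/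
theorem creating_subject_positivity_tests
    (Box : ℕ → Prop → Prop) (A : Prop)
    (cs1 : ∀ (n : ℕ) (P : Prop), Box n P ∨ ¬ Box n P)
    (cs2 : ∀ (n m : ℕ) (P : Prop), Box n P → Box (n + m) P)
    (cs3 : ∀ P : Prop, (P → ¬¬ ∃ n, Box n P) ∧ ((∃ n, Box n P) → P))
    (r : ℕ → ℚ)
    (hr0 : ∀ n, (∀ m ≤ n, ¬ Box m A ∧ ¬ Box m (¬A)) → r n = 0)
    (hrA : ∀ n k, k ≤ n → Box k A →
      (∀ m < k, ¬ Box m A ∧ ¬ Box m (¬A)) → r n = (2:ℚ)^(-(k:ℤ)))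
    (hrnA : ∀ n k, k ≤ n → Box k (¬A) →
      (∀ m < k, ¬ Box m A ∧ ¬ Box m (¬A)) → r n = -(2:ℚ)^(-(k:ℤ))) :
    ((∃ n, r n > 0) → A) ∧
    ((∃ n, r n < 0) → ¬A) ∧
    ((∃ n, r n > 0) ∨ (∃ n, r n < 0) → (¬A ∨ ¬¬A)) := by
  classical
  have key : ∀ n, r n ≠ 0 → ∃ k, k ≤ n ∧ (Box k A ∨ Box k (¬A)) ∧
      (∀ m < k, ¬ Box m A ∧ ¬ Box m (¬A)) := by
    intro n hn
    by_cases h : ∃ m, m ≤ n ∧ (Box m A ∨ Box m (¬A))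
    · refine ⟨Nat.find h, (Nat.find_spec h).1, (Nat.find_spec h).2, ?_⟩
      intro m hm
      have hmin := Nat.find_min h hm
      have hmn : m ≤ n := le_trans (le_of_lt hm) (Nat.find_spec h).1
      exact ⟨fun hb => hmin ⟨hmn, Or.inl hb⟩, fun hb => hmin ⟨hmn, Or.inr hb⟩⟩
    · exact absurd (hr0 n (fun m hm => ⟨fun hb => h ⟨m, hm, Or.inl hb⟩,
        fun hb => h ⟨m, hm, Or.inr hb⟩⟩)) hn
  have hpos : (∃ n, r n > 0) → A := by
    rintro ⟨n, hn⟩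
    obtain ⟨k, hkn, hbox, hmin⟩ := key n (ne_of_gt hn)
    rcases hbox with hb | hb
    · exact (cs3 A).2 ⟨k, hb⟩
    · have := hrnA n k hkn hb hmin
      rw [this] at hn
      have : (0:ℚ) < (2:ℚ)^(-(k:ℤ)) := by positivity
      linarith
  have hneg : (∃ n, r n < 0) → ¬A := by
    rintro ⟨n, hn⟩
    obtain ⟨k, hkn, hbox, hmin⟩ := key n (ne_of_lt hn)
    rcases hbox with hb | hb
    · have := hrA n k hkn hb hmin
      rw [this] at hn
      have : (0:ℚ) < (2:ℚ)^(-(k:ℤ)) := by positivity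
      linarith
    · exact (cs3 (¬A)).2 ⟨k, hb⟩
  exact ⟨hpos, hneg, fun h => h.elim (fun h' => Or.inr (fun hna => hna (hpos h')))
    (fun h' => Or.inl (hneg h'))⟩
end

section
/- Under CS⁻, the Creating Subject real number from an untested proposition is nonzero: with Box and r as above (CS1, CS2, CS⁻3), one has (∀n, r n = 0) ↔ (¬A ∧ ¬¬A), and since ¬A ∧ ¬¬A is contradictory, ¬(∀n, r n = 0); i.e. r ≠ 0 in the sense that it is impossible for r to be the zero sequence. -/
theorem creating_subject_number_nonzero
    (Box : ℕ → Prop → Prop) (A : Prop)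
    (cs1 : ∀ (n : ℕ) (P : Prop), Box n P ∨ ¬ Box n P)
    (cs2 : ∀ (n m : ℕ) (P : Prop), Box n P → Box (n + m) P)
    (cs3 : ∀ P : Prop, (P → ¬¬ ∃ n, Box n P) ∧ ((∃ n, Box n P) → P))
    (r : ℕ → ℚ)
    (hr0 : ∀ n, (∀ m ≤ n, ¬ Box m A ∧ ¬ Box m (¬A)) → r n = 0)
    (hrA : ∀ n k, k ≤ n → Box k A →
      (∀ m < k, ¬ Box m A ∧ ¬ Box m (¬A)) → r n = (2:ℚ)^(-(k:ℤ)))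
    (hrnA : ∀ n k, k ≤ n → Box k (¬A) →
      (∀ m < k, ¬ Box m A ∧ ¬ Box m (¬A)) → r n = -(2:ℚ)^(-(k:ℤ))) :
    ((∀ n, r n = 0) ↔ (¬A ∧ ¬¬A)) ∧ ¬ (∀ n, r n = 0) := by
  classical
  have key : (∀ n, r n = 0) → ¬ ∃ n, Box n A ∨ Box n (¬A) := by
    intro hz hex
    have hk := Nat.find_spec hex
    set k := Nat.find hex with hkdef
    have hmin : ∀ m < k, ¬ Box m A ∧ ¬ Box m (¬A) := by
      intro m hm
      have := Nat.find_min hex hm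
      push_neg at this
      exact this
    have hpow : (2:ℚ)^(-(k:ℤ)) ≠ 0 := by positivity
    rcases hk with h | h
    · have := hrA k k le_rfl h hmin
      rw [hz k] at this
      exact hpow this.symm
    · have := hrnA k k le_rfl h hmin
      rw [hz k] at this
      exact hpow (neg_eq_zero.mp this.symm)
  have fwd : (∀ n, r n = 0) → (¬A ∧ ¬¬A) := by
    intro hz
    have hne := key hz
    constructor
    · intro ha
      exact (cs3 A).1 ha (fun ⟨n, hn⟩ => hne ⟨n, Or.inl hn⟩)
    · intro hna
      exact (cs3 (¬A)).1 hna (fun ⟨n, hn⟩ => hne ⟨n, Or.inr hn⟩)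
  refine ⟨⟨fwd, fun h => absurd h.1 h.2⟩, fun hz => absurd (fwd hz).1 (fwd hz).2⟩
end
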